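/- arXiv:2305.04234 — 4 statements merged into one kernel-verified Lean document; each statement's English description precedes it below -/
import Mathlib

section
/- Let Φ be a connected GMSNP τ-sentence and R ∈ τ such that B_R does not satisfy Φ. Let Φ^{∖R} be the (τ∖{R})-sentence obtained from Φ by removing all negated conjuncts that contain an R-atom. Then: (i) every τ-structure A with R^A ≠ ∅ satisfies A ⊭ Φ; and (ii) every τ-structure A with R^A = ∅ satisfies A ⊨ Φ if and only if the (τ∖{R})-reduct of A satisfies Φ^{∖R}. -/
/-- A finite relational signature: a type of relation symbols together with arities. -/
structure Signature where
  symb : Type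
  arity : symb → ℕ

/-- A relational structure over signature `τ`: a domain together with an
interpretation of every relation symbol as a set of tuples. -/
structure Struct (τ : Signature) where
  Dom : Type
  rel : ∀ r : τ.symb, Set (Fin (τ.arity r) → Dom)

/-- A homomorphism of `τ`-structures: a map of domains preserving every relation. -/
def IsHom {τ : Signature} (A B : Struct τ) (h : A.Dom → B.Dom) : Prop :=
  ∀ r : τ.symb, ∀ t ∈ A.rel r, (fun i => h (t i)) ∈ B.rel r

/-- A negated conjunct `¬(α ∧ β ∧ ε)` of an SNP sentence: a set of first-order
variables, a list of signed `τ`-atoms (`true` = positive), a list of signed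
`σ`-atoms, and a list of inequalities between variables. -/
structure Conjunct (τ σ : Signature) where
  Vars : Type
  tlits : List (Bool × (Σ r : τ.symb, Fin (τ.arity r) → Vars))
  slits : List (Bool × (Σ X : σ.symb, Fin (σ.arity X) → Vars))
  ineqs : List (Vars × Vars)

/-- An SNP sentence `∃X₁…Xₛ ∀x̄ ⋀ᵢ ¬(αᵢ ∧ βᵢ ∧ εᵢ)` over input signature `τ`
and existential signature `σ`, given by its list of negated conjuncts. -/
structure SNP (τ σ : Signature) where
  conjs : List (Conjunct τ σ)

/-- The conjunction `α ∧ β ∧ ε` inside a negated conjunct holds under given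
interpretations of the `τ`- and `σ`-symbols and an assignment `v` of the variables. -/
def Conjunct.HoldsUnder {τ σ : Signature} (c : Conjunct τ σ) {D : Type}
    (rt : ∀ r : τ.symb, Set (Fin (τ.arity r) → D))
    (rs : ∀ X : σ.symb, Set (Fin (σ.arity X) → D))
    (v : c.Vars → D) : Prop :=
  (∀ l ∈ c.tlits, if l.1 = true then (fun i => v (l.2.2 i)) ∈ rt l.2.1
      else (fun i => v (l.2.2 i)) ∉ rt l.2.1) ∧
  (∀ l ∈ c.slits, if l.1 = true then (fun i => v (l.2.2 i)) ∈ rs l.2.1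
      else (fun i => v (l.2.2 i)) ∉ rs l.2.1) ∧
  (∀ p ∈ c.ineqs, v p.1 ≠ v p.2)

/-- `A ⊨ Φ`: there is an interpretation of the existential symbols such that
every negated conjunct is falsified by every assignment of the variables. -/
def SNP.Sat {τ σ : Signature} (Φ : SNP τ σ) (A : Struct τ) : Prop :=
  ∃ rs : ∀ X : σ.symb, Set (Fin (σ.arity X) → A.Dom),
    ∀ c ∈ Φ.conjs, ∀ v : c.Vars → A.Dom, ¬ c.HoldsUnder A.rel rs v

/-- Φ is monotone: no negated `τ`-atoms occur. -/
def SNP.MonotoneSNP {τ σ : Signature} (Φ : SNP τ σ) : Prop :=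
  ∀ c ∈ Φ.conjs, ∀ l ∈ c.tlits, l.1 = true

/-- Φ is without inequality: each εᵢ is empty. -/
def SNP.NoIneq {τ σ : Signature} (Φ : SNP τ σ) : Prop :=
  ∀ c ∈ Φ.conjs, c.ineqs = []

/-- Every negated σ-atom is guarded by a τ-atom or by a nonnegated σ-atom. -/
def Conjunct.Guarded {τ σ : Signature} (c : Conjunct τ σ) : Prop :=
  ∀ l ∈ c.slits, l.1 = false →
    (∃ g ∈ c.tlits, Set.range l.2.2 ⊆ Set.range g.2.2) ∨
    (∃ g ∈ c.slits, g.1 = true ∧ Set.range l.2.2 ⊆ Set.range g.2.2)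

/-- Φ is in guarded monotone SNP (GMSNP). -/
def SNP.GMSNP {τ σ : Signature} (Φ : SNP τ σ) : Prop :=
  Φ.MonotoneSNP ∧ Φ.NoIneq ∧ ∀ c ∈ Φ.conjs, c.Guarded

/-- The list of variable sets of the literals of a conjunct. -/
def Conjunct.litVars {τ σ : Signature} (c : Conjunct τ σ) : List (Set c.Vars) :=
  c.tlits.map (fun l => Set.range l.2.2) ++ c.slits.map (fun l => Set.range l.2.2) ++
    c.ineqs.map (fun p => {p.1, p.2})

/-- A conjunct is connected: it cannot be split into two nonempty parts
whose variable sets are disjoint. -/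
def Conjunct.Connected {τ σ : Signature} (c : Conjunct τ σ) : Prop :=
  ∀ S : Set (Fin c.litVars.length), S.Nonempty → Sᶜ.Nonempty →
    ∃ i ∈ S, ∃ j ∈ Sᶜ, ∃ x : c.Vars, x ∈ c.litVars.get i ∧ x ∈ c.litVars.get j

/-- An SNP sentence is connected if all its negated conjuncts are. -/
def SNP.Connected {τ σ : Signature} (Φ : SNP τ σ) : Prop :=
  ∀ c ∈ Φ.conjs, c.Connected

/-- Disjoint union of two `τ`-structures. -/
def Struct.dsum {τ : Signature} (A B : Struct τ) : Struct τ where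
  Dom := A.Dom ⊕ B.Dom
  rel r := {t | (∃ t' ∈ A.rel r, t = fun i => Sum.inl (t' i)) ∨
                (∃ t' ∈ B.rel r, t = fun i => Sum.inr (t' i))}

/-- Disjoint union of a family of `τ`-structures. -/
def Struct.dSigma {τ : Signature} {I : Type} (F : I → Struct τ) : Struct τ where
  Dom := Σ i, (F i).Dom
  rel r := {t | ∃ i, ∃ t' ∈ (F i).rel r, t = fun j => ⟨i, t' j⟩}

/-- The structure `B_R` consisting of a single `R`-tuple of pairwise distinct elements. -/
def BStruct (τ : Signature) (R : τ.symb) : Struct τ where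
  Dom := Fin (τ.arity R)
  rel S := {t | ∃ h : S = R, ∀ i, t i = Fin.cast (congrArg τ.arity h) i}

/-- The signature `τ ∖ {R}`. -/
def Signature.erase (τ : Signature) (R : τ.symb) : Signature :=
  ⟨{S : τ.symb // S ≠ R}, fun S => τ.arity S.1⟩

/-- The conjunct contains no `R`-atom. -/
def Conjunct.NoAtom {τ σ : Signature} (c : Conjunct τ σ) (R : τ.symb) : Prop :=
  ∀ l ∈ c.tlits, l.2.1 ≠ R

/-- Reinterpret a conjunct without `R`-atoms over the signature `τ ∖ {R}`. -/
def Conjunct.eraseSym {τ σ : Signature} (R : τ.symb) (c : Conjunct τ σ)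
    (h : c.NoAtom R) : Conjunct (τ.erase R) σ where
  Vars := c.Vars
  tlits := c.tlits.attach.map (fun l => (l.1.1, ⟨⟨l.1.2.1, h l.1 l.2⟩, l.1.2.2⟩))
  slits := c.slits
  ineqs := c.ineqs

/-- `Φ^{∖R}`: remove all negated conjuncts containing an `R`-atom and view the
result as a sentence over `τ ∖ {R}`. -/
noncomputable def SNP.eraseSym {τ σ : Signature} (Φ : SNP τ σ) (R : τ.symb) :
    SNP (τ.erase R) σ := by
  classical
  exact ⟨(Φ.conjs.filter (fun c => decide (c.NoAtom R))).attach.map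
    (fun c => c.1.eraseSym R (of_decide_eq_true (List.mem_filter.mp c.2).2))⟩

/-- The `τ ∖ {R}`-reduct of a `τ`-structure. -/
def Struct.reduct {τ : Signature} (A : Struct τ) (R : τ.symb) : Struct (τ.erase R) :=
  ⟨A.Dom, fun S => A.rel S.1⟩

lemma erase_holds_iff {τ σ : Signature} (R : τ.symb) (c : Conjunct τ σ)
    (h : c.NoAtom R) (A : Struct τ)
    (rs : ∀ X : σ.symb, Set (Fin (σ.arity X) → A.Dom))
    (v : c.Vars → A.Dom) :
    (c.eraseSym R h).HoldsUnder (A.reduct R).rel rs v ↔ c.HoldsUnder A.rel rs v := by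
  unfold Conjunct.HoldsUnder Conjunct.eraseSym
  simp only [List.mem_map, List.mem_attach]
  constructor
  · rintro ⟨h1, h2, h3⟩
    refine ⟨?_, h2, h3⟩
    intro l hl
    exact h1 (l.1, ⟨⟨l.2.1, h l hl⟩, l.2.2⟩) ⟨⟨l, hl⟩, trivial, rfl⟩
  · rintro ⟨h1, h2, h3⟩
    refine ⟨?_, h2, h3⟩
    rintro l ⟨⟨l', hl'⟩, -, rfl⟩
    exact h1 l' hl'

/-- If a connected GMSNP sentence `Φ` is false on `B_R`, then (i) no structure with
nonempty `R`-relation satisfies `Φ`, and (ii) on structures with empty `R`-relation,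
`Φ` is equivalent to `Φ^{∖R}` evaluated on the `τ∖{R}`-reduct. -/
theorem sat_eraseSym_of_BStruct_not_sat {τ σ : Signature} (Φ : SNP τ σ) (R : τ.symb)
    (hg : Φ.GMSNP) (hconn : Φ.Connected) (hB : ¬ Φ.Sat (BStruct τ R)) :
    (∀ A : Struct τ, (A.rel R).Nonempty → ¬ Φ.Sat A) ∧
    (∀ A : Struct τ, A.rel R = ∅ → (Φ.Sat A ↔ (Φ.eraseSym R).Sat (A.reduct R))) := by
  classical
  obtain ⟨hmono, hnoineq, -⟩ := hg
  constructor
  · rintro A ⟨t, ht⟩ ⟨rs, hrs⟩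
    apply hB
    refine ⟨fun X => {s | (fun i => t (s i)) ∈ rs X}, ?_⟩
    rintro c hc v ⟨h1, h2, h3⟩
    apply hrs c hc (fun x => t (v x))
    refine ⟨?_, ?_, ?_⟩
    · intro l hl
      have hpos := hmono c hc l hl
      have h1l := h1 l hl
      rw [hpos] at h1l ⊢
      simp only [if_true] at h1l ⊢
      obtain ⟨hR, heq⟩ := h1l
      subst hR
      have hfun : (fun i => t (v (l.2.2 i))) = t := by
        funext i
        have hvi : v (l.2.2 i) = i := by
          have := heq i
          simp only at this
          rw [this]
          rfl
        rw [hvi]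
      show (fun i => t (v (l.2.2 i))) ∈ A.rel l.2.1
      rw [hfun]
      exact ht
    · intro l hl
      have h2l := h2 l hl
      by_cases hb : l.1 = true
      · rw [if_pos hb] at h2l ⊢
        exact h2l
      · rw [if_neg hb] at h2l ⊢
        exact h2l
    · intro p hp
      rw [hnoineq c hc] at hp
      exact absurd hp List.not_mem_nil
  · intro A hA
    constructor
    · rintro ⟨rs, hrs⟩
      refine ⟨rs, ?_⟩
      intro c' hc' v
      unfold SNP.eraseSym at hc'
      simp only [List.mem_map, List.mem_attach] at hc'
      obtain ⟨⟨c, hc⟩, -, rfl⟩ := hc'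
      have key := erase_holds_iff R c (of_decide_eq_true (List.mem_filter.mp hc).2) A rs v
      exact fun hh => hrs c (List.mem_of_mem_filter hc) v (key.mp hh)
    · rintro ⟨rs, hrs⟩
      refine ⟨rs, ?_⟩
      intro c hc v hhold
      by_cases hno : c.NoAtom R
      · have hcf : c ∈ Φ.conjs.filter (fun c => decide (c.NoAtom R)) :=
          List.mem_filter.mpr ⟨hc, decide_eq_true hno⟩
        have hmem : c.eraseSym R (of_decide_eq_true (List.mem_filter.mp hcf).2)
            ∈ (Φ.eraseSym R).conjs := by
          unfold SNP.eraseSym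
          simp only [List.mem_map, List.mem_attach]
          exact ⟨⟨c, hcf⟩, trivial, rfl⟩
        exact hrs _ hmem v ((erase_holds_iff R c _ A rs v).mpr hhold)
      · unfold Conjunct.NoAtom at hno
        push_neg at hno
        obtain ⟨l, hl, hlR⟩ := hno
        obtain ⟨h1, -, -⟩ := hhold
        have hpos := hmono c hc l hl
        have := h1 l hl
        rw [hpos] at this
        simp only [if_true] at this
        subst hlR
        rw [hA] at this
        exact this
end

section
/- Let Φ be a GMSNP τ-sentence and Φ' its enrichment. Then: (i) every τ-structure A with R^A = ∅ for some R ∈ τ satisfies A ⊨ Φ'; and (ii) every τ-structure A with R^A ≠ ∅ for all R ∈ τ satisfies A ⊨ Φ if and only if A ⊨ Φ'. -/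
/-- The enrichment of a negated conjunct: add, for every `R ∈ τ` (enumerated by
`syms`), a nonnegated `R`-atom on a tuple of fresh variables used only there. -/
def Conjunct.enrich {τ σ : Signature} (syms : List τ.symb) (c : Conjunct τ σ) :
    Conjunct τ σ where
  Vars := c.Vars ⊕ (Σ R : τ.symb, Fin (τ.arity R))
  tlits := c.tlits.map (fun l => (l.1, ⟨l.2.1, fun i => Sum.inl (l.2.2 i)⟩)) ++
           syms.map (fun R => (true, ⟨R, fun i => Sum.inr ⟨R, i⟩⟩))
  slits := c.slits.map (fun l => (l.1, ⟨l.2.1, fun i => Sum.inl (l.2.2 i)⟩))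
  ineqs := c.ineqs.map (fun p => (Sum.inl p.1, Sum.inl p.2))

/-- The enrichment `Φ'` of `Φ`: every negated conjunct `¬φᵢ` is replaced by
`¬(φᵢ ∧ ⋀_{R∈τ} R(x̄_R))` with fresh tuples of variables `x̄_R`. -/
def SNP.enrich {τ σ : Signature} (syms : List τ.symb) (Φ : SNP τ σ) : SNP τ σ :=
  ⟨Φ.conjs.map (Conjunct.enrich syms)⟩

/-- (i) If some relation of `A` is empty then `A` satisfies the enrichment `Φ'`;
(ii) if all relations of `A` are nonempty then `A ⊨ Φ` iff `A ⊨ Φ'`. -/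
theorem sat_enrich_iff {τ σ : Signature} (syms : List τ.symb)
    (hsyms : ∀ R : τ.symb, R ∈ syms) (hnd : syms.Nodup)
    (Φ : SNP τ σ) (hg : Φ.GMSNP) :
    (∀ A : Struct τ, (∃ R : τ.symb, A.rel R = ∅) → (Φ.enrich syms).Sat A) ∧
    (∀ A : Struct τ, (∀ R : τ.symb, (A.rel R).Nonempty) →
      (Φ.Sat A ↔ (Φ.enrich syms).Sat A)) := by
  constructor
  · rintro A ⟨R, hR⟩
    refine ⟨fun _ => ∅, ?_⟩
    intro c hc v hv
    obtain ⟨c0, hc0, rfl⟩ := List.mem_map.mp hc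
    have h1 := hv.1 (true, ⟨R, fun i => Sum.inr ⟨R, i⟩⟩)
      (List.mem_append_right _ (List.mem_map.mpr ⟨R, hsyms R, rfl⟩))
    simp only [if_pos rfl] at h1
    rw [hR] at h1
    exact h1
  · intro A hA
    constructor
    · rintro ⟨rs, hrs⟩
      refine ⟨rs, ?_⟩
      intro c hc v hv
      obtain ⟨c0, hc0, rfl⟩ := List.mem_map.mp hc
      apply hrs c0 hc0 (fun x => v (Sum.inl x))
      obtain ⟨h1, h2, h3⟩ := hv
      refine ⟨?_, ?_, ?_⟩
      · intro l hl
        exact h1 (l.1, ⟨l.2.1, fun i => Sum.inl (l.2.2 i)⟩)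
          (List.mem_append_left _ (List.mem_map.mpr ⟨l, hl, rfl⟩))
      · intro l hl
        exact h2 (l.1, ⟨l.2.1, fun i => Sum.inl (l.2.2 i)⟩)
          (List.mem_map.mpr ⟨l, hl, rfl⟩)
      · intro p hp
        exact h3 (Sum.inl p.1, Sum.inl p.2) (List.mem_map.mpr ⟨p, hp, rfl⟩)
    · rintro ⟨rs, hrs⟩
      refine ⟨rs, ?_⟩
      intro c hc v hv
      choose t ht using hA
      set w : c.Vars ⊕ (Σ R : τ.symb, Fin (τ.arity R)) → A.Dom :=
        fun x => match x with | Sum.inl a => v a | Sum.inr ⟨R, i⟩ => t R i with hw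
      apply hrs (c.enrich syms) (List.mem_map.mpr ⟨c, hc, rfl⟩) w
      obtain ⟨h1, h2, h3⟩ := hv
      refine ⟨?_, ?_, ?_⟩
      · intro l hl
        rcases List.mem_append.mp hl with h | h
        · obtain ⟨l0, hl0, rfl⟩ := List.mem_map.mp h
          exact h1 l0 hl0
        · obtain ⟨R, hR, rfl⟩ := List.mem_map.mp h
          simpa [hw] using ht R
      · intro l hl
        obtain ⟨l0, hl0, rfl⟩ := List.mem_map.mp hl
        exact h2 l0 hl0
      · intro p hp
        obtain ⟨p0, hp0, rfl⟩ := List.mem_map.mp hp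
        exact h3 p0 hp0
end

section
/- Let Φ be an enriched GMSNP τ-sentence, τ = {R₁,…,R_t}, and Φ¹ the τ₁-sentence obtained by the concatenation construction, where τ₁ = {P}. For a τ-structure A, let A₁ be the τ₁-structure on the same domain defined by: P^{A₁}(ā₁,…,ā_t) holds if and only if R₁^A(ā₁) and … and R_t^A(ā_t) all hold. Then A ⊨ Φ if and only if A₁ ⊨ Φ¹. -/
/-- The signature `τ = {R₁,…,R_t}` with arities `a`. -/
def finSig (t : ℕ) (a : Fin t → ℕ) : Signature := ⟨Fin t, a⟩

/-- The signature `τ₁ = {P}` with a single symbol of arity `Σⱼ arity(Rⱼ)`. -/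
def oneSig (t : ℕ) (a : Fin t → ℕ) : Signature := ⟨Unit, fun _ => ∑ j, a j⟩

/-- `e` is the canonical (order-preserving) bijection identifying a position in the
concatenation `(ȳ₁,…,ȳ_t)` with a pair (index `j`, position in `ȳⱼ`). -/
def IsConcatEquiv {t : ℕ} {a : Fin t → ℕ}
    (e : (Σ j : Fin t, Fin (a j)) ≃ Fin (∑ j, a j)) : Prop :=
  ∀ p q : Σ j : Fin t, Fin (a j),
    (p.1 < q.1 ∨ (p.1 = q.1 ∧ (p.2 : ℕ) < (q.2 : ℕ))) → e p < e q

/-- Φ is enriched: every negated conjunct contains at least one `R`-atom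
for each symbol `R` of the input signature. -/
def SNP.Enriched {τ σ : Signature} (Φ : SNP τ σ) : Prop :=
  ∀ c ∈ Φ.conjs, ∀ R : τ.symb, ∃ l ∈ c.tlits, l.2.1 = R

/-- The concatenation construction on a negated conjunct: σ-literals are kept, and
each τ-atom `Rⱼ(x̄)` is replaced by the atom `P(ȳ₁,…,ȳ_t)` where `ȳⱼ = x̄` and all
other variables are fresh and used only in that atom. -/
def Conjunct.concat {t : ℕ} {a : Fin t → ℕ} {σ : Signature}
    (e : (Σ j : Fin t, Fin (a j)) ≃ Fin (∑ j, a j))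
    (c : Conjunct (finSig t a) σ) : Conjunct (oneSig t a) σ where
  Vars := c.Vars ⊕ (Fin c.tlits.length × Fin (∑ j, a j))
  tlits := List.ofFn (fun m : Fin c.tlits.length =>
    ((c.tlits.get m).1, ⟨(), fun k =>
      @dite _ ((e.symm k).1 = (c.tlits.get m).2.1) (instDecidableEqFin t _ _) (fun h =>
        Sum.inl ((c.tlits.get m).2.2 (Fin.cast (congrArg a h) (e.symm k).2)))
      (fun _ => Sum.inr (m, k))⟩))
  slits := c.slits.map (fun l => (l.1, ⟨l.2.1, fun i => Sum.inl (l.2.2 i)⟩))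
  ineqs := c.ineqs.map (fun p => (Sum.inl p.1, Sum.inl p.2))

/-- The sentence `Φ¹` over `τ₁ = {P}` obtained by the concatenation construction. -/
def SNP.concat {t : ℕ} {a : Fin t → ℕ} {σ : Signature}
    (e : (Σ j : Fin t, Fin (a j)) ≃ Fin (∑ j, a j))
    (Φ : SNP (finSig t a) σ) : SNP (oneSig t a) σ :=
  ⟨Φ.conjs.map (Conjunct.concat e)⟩

/-- The `τ₁`-structure `A₁` on the same domain as `A`:
`P^{A₁}(ā₁,…,ā_t)` iff `Rⱼ^A(āⱼ)` for every `j`. -/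
def Struct.toOne {t : ℕ} {a : Fin t → ℕ}
    (e : (Σ j : Fin t, Fin (a j)) ≃ Fin (∑ j, a j))
    (A : Struct (finSig t a)) : Struct (oneSig t a) where
  Dom := A.Dom
  rel := fun _ => {u | ∀ j : Fin t, (fun i => u (e ⟨j, i⟩)) ∈ A.rel j}

namespace Conjunct

variable {t : ℕ} {a : Fin t → ℕ} {σ : Signature}

-- The tuple of the `m`-th `P`-atom of `c.concat e`, as written in `Conjunct.concat`.
def concatTuple (e : (Σ j : Fin t, Fin (a j)) ≃ Fin (∑ j, a j))
    (c : Conjunct (finSig t a) σ) (m : Fin c.tlits.length) :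
    Fin (∑ j, a j) → (c.concat e).Vars := fun k =>
  @dite _ ((e.symm k).1 = (c.tlits.get m).2.1) (instDecidableEqFin t _ _) (fun h =>
    Sum.inl ((c.tlits.get m).2.2 (Fin.cast (congrArg a h) (e.symm k).2)))
    (fun _ => Sum.inr (m, k))

variable (e : (Σ j : Fin t, Fin (a j)) ≃ Fin (∑ j, a j)) (c : Conjunct (finSig t a) σ)

theorem mem_concat_tlits {l} :
    l ∈ (c.concat e).tlits ↔ ∃ m, ((c.tlits.get m).1, ⟨(), c.concatTuple e m⟩) = l :=
  List.mem_ofFn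

theorem concatTuple_apply_self (m : Fin c.tlits.length) (i : Fin (a (c.tlits.get m).2.1)) :
    c.concatTuple e m (e ⟨_, i⟩) = Sum.inl ((c.tlits.get m).2.2 i) := by
  have key := e.symm_apply_apply ⟨_, i⟩
  exact (dif_pos (congrArg Sigma.fst key)).trans <|
    congrArg (fun k => Sum.inl ((c.tlits.get m).2.2 k)) <|
      Fin.ext (congrArg (fun p => (p.2 : ℕ)) key)

theorem concatTuple_apply_of_ne (m : Fin c.tlits.length) {j : Fin t} (i : Fin (a j))
    (hj : j ≠ (c.tlits.get m).2.1) :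
    c.concatTuple e m (e ⟨j, i⟩) = Sum.inr (m, e ⟨j, i⟩) :=
  dif_neg (by simpa using hj)

variable {e c} {A : Struct (finSig t a)} {rs : ∀ X : σ.symb, Set (Fin (σ.arity X) → A.Dom)}

theorem holdsUnder_of_concat (hpos : ∀ l ∈ c.tlits, l.1 = true)
    {v : (c.concat e).Vars → A.Dom} (hv : (c.concat e).HoldsUnder (A.toOne e).rel rs v) :
    c.HoldsUnder A.rel rs (v ∘ Sum.inl) := by
  obtain ⟨hτ, hσ, hne⟩ := hv
  refine ⟨fun l hl => ?_, fun l hl => hσ _ (List.mem_map_of_mem hl),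
    fun p hp => hne _ (List.mem_map_of_mem hp)⟩
  obtain ⟨m, rfl⟩ := List.mem_iff_get.mp hl
  have hm := hτ _ ((mem_concat_tlits e c).2 ⟨m, rfl⟩)
  simp only [hpos _ hl, if_true] at hm ⊢
  have hself := hm (c.tlits.get m).2.1
  simp only [concatTuple_apply_self] at hself
  exact hself

theorem concat_holdsUnder (hpos : ∀ l ∈ c.tlits, l.1 = true)
    {u : Fin (∑ j, a j) → A.Dom} (hu : u ∈ (A.toOne e).rel ())
    {v : c.Vars → A.Dom} (hv : c.HoldsUnder A.rel rs v) :
    (c.concat e).HoldsUnder (A.toOne e).rel rs (Sum.elim v (u ∘ Prod.snd)) := by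
  obtain ⟨hτ, hσ, hne⟩ := hv
  refine ⟨fun l hl => ?_, ?_, ?_⟩
  · obtain ⟨m, rfl⟩ := (mem_concat_tlits e c).1 hl
    have hm := hτ _ (List.get_mem _ m)
    simp only [hpos _ (List.get_mem _ m), if_true] at hm ⊢
    intro j
    by_cases hj : j = (c.tlits.get m).2.1
    · subst hj
      simp only [concatTuple_apply_self]
      exact hm
    · simp only [concatTuple_apply_of_ne _ _ _ _ hj]
      exact hu j
  · intro l hl
    obtain ⟨l₀, hl₀, rfl⟩ := List.mem_map.1 hl
    exact hσ l₀ hl₀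
  · intro p hp
    obtain ⟨p₀, hp₀, rfl⟩ := List.mem_map.1 hp
    exact hne p₀ hp₀

theorem HoldsUnder.rel_nonempty {τ : Signature} {c : Conjunct τ σ} {D : Type}
    {rt : ∀ r : τ.symb, Set (Fin (τ.arity r) → D)} {rs : ∀ X : σ.symb, Set (Fin (σ.arity X) → D)}
    {v : c.Vars → D} (h : c.HoldsUnder rt rs v) {l} (hl : l ∈ c.tlits) (hpos : l.1 = true) :
    (rt l.2.1).Nonempty :=
  ⟨_, by simpa [hpos] using h.1 l hl⟩

end Conjunct

theorem Struct.toOne_rel_nonempty {t : ℕ} {a : Fin t → ℕ}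
    (e : (Σ j : Fin t, Fin (a j)) ≃ Fin (∑ j, a j)) (A : Struct (finSig t a))
    (hA : ∀ j, (A.rel j).Nonempty) : ((A.toOne e).rel ()).Nonempty := by
  choose w hw using hA
  exact ⟨fun k => Sigma.uncurry w (e.symm k), fun j => by
    simp only [Equiv.symm_apply_apply]
    exact hw j⟩

theorem sat_concat_toOne_general {t : ℕ} {a : Fin t → ℕ} {σ : Signature}
    (e : (Σ j : Fin t, Fin (a j)) ≃ Fin (∑ j, a j))
    (Φ : SNP (finSig t a) σ) (hg : Φ.GMSNP) (henr : Φ.Enriched)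
    (A : Struct (finSig t a)) :
    Φ.Sat A ↔ (Φ.concat e).Sat (A.toOne e) := by
  constructor
  · rintro ⟨rs, hrs⟩
    refine ⟨rs, fun _ hc' v hv => ?_⟩
    obtain ⟨c, hc, rfl⟩ := List.mem_map.1 hc'
    exact hrs c hc _ (Conjunct.holdsUnder_of_concat (hg.1 c hc) hv)
  · rintro ⟨rs, hrs⟩
    refine ⟨rs, fun c hc v hv => ?_⟩
    obtain ⟨u, hu⟩ := A.toOne_rel_nonempty e fun j => by
      obtain ⟨l, hl, rfl⟩ := henr c hc j
      exact hv.rel_nonempty hl (hg.1 c hc l hl)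
    exact hrs _ (List.mem_map_of_mem hc) _ (Conjunct.concat_holdsUnder (hg.1 c hc) hu hv)

/-- For an enriched GMSNP sentence `Φ` and the concatenated sentence `Φ¹`:
`A ⊨ Φ` iff `A₁ ⊨ Φ¹`. -/
theorem sat_concat_toOne {t : ℕ} {a : Fin t → ℕ} {σ : Signature}
    (e : (Σ j : Fin t, Fin (a j)) ≃ Fin (∑ j, a j)) (he : IsConcatEquiv e)
    (Φ : SNP (finSig t a) σ) (hg : Φ.GMSNP) (henr : Φ.Enriched)
    (A : Struct (finSig t a)) :
    Φ.Sat A ↔ (Φ.concat e).Sat (A.toOne e) :=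
  sat_concat_toOne_general e Φ hg henr A
end

section
/- Let Φ be an enriched GMSNP τ-sentence, τ = {R₁,…,R_t}, and Φ¹ the τ₁-sentence obtained by the concatenation construction, where τ₁ = {P}. For a τ₁-structure B₁, let B be the τ-structure on the same domain defined by: Rⱼ^B(x̄ⱼ) holds if and only if there exist tuples x̄₁,…,x̄_{j−1},x̄_{j+1},…,x̄_t such that P^{B₁}(x̄₁,…,x̄_t) holds. Then B₁ ⊨ Φ¹ if and only if B ⊨ Φ. -/
/-- The `τ`-structure `B` on the same domain as a `τ₁`-structure `B₁`:
`Rⱼ^B(x̄ⱼ)` iff there exist `x̄₁,…,x̄_{j−1},x̄_{j+1},…,x̄_t` with `P^{B₁}(x̄₁,…,x̄_t)`. -/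
def Struct.fromOne {t : ℕ} {a : Fin t → ℕ}
    (e : (Σ j : Fin t, Fin (a j)) ≃ Fin (∑ j, a j))
    (B1 : Struct (oneSig t a)) : Struct (finSig t a) where
  Dom := B1.Dom
  rel := fun j => {x | ∃ u ∈ B1.rel (), ∀ i, u (e ⟨j, i⟩) = x i}

/-
In a monotone sentence every τ-atom `Rⱼ(x̄)` only has to hold, and
under an assignment into `B₁` the atom `P(ȳ₁,…,ȳ_t)` replacing it holds for some
values of its fresh variables exactly when `x̄ ∈ Rⱼ^B`, by the definition of `B`.
Since the fresh variables of different atoms are distinct, these values can be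
chosen atom by atom; σ-literals and inequalities only involve the old variables.
-/

namespace Conjunct

variable {τ σ : Signature} {D : Type}

theorem forall_tlits_iff_of_positive (c : Conjunct τ σ) (hc : ∀ l ∈ c.tlits, l.1 = true)
    (rt : ∀ r : τ.symb, Set (Fin (τ.arity r) → D)) (v : c.Vars → D) :
    (∀ l ∈ c.tlits, if l.1 = true then (fun i => v (l.2.2 i)) ∈ rt l.2.1
      else (fun i => v (l.2.2 i)) ∉ rt l.2.1) ↔
    ∀ m : Fin c.tlits.length,
      (fun i => v ((c.tlits.get m).2.2 i)) ∈ rt (c.tlits.get m).2.1 := by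
  rw [List.forall_mem_iff_get]
  exact forall_congr' fun m => iff_of_eq (if_pos (hc _ (c.tlits.get_mem m)))

variable {t : ℕ} {a : Fin t → ℕ} (e : (Σ j : Fin t, Fin (a j)) ≃ Fin (∑ j, a j))

/-- The variable tuple of the `m`-th atom of `c.concat e`. -/
def concatAtom (c : Conjunct (finSig t a) σ) (m : Fin c.tlits.length) :
    Fin (∑ j, a j) → (c.concat e).Vars := fun k =>
  @dite _ ((e.symm k).1 = (c.tlits.get m).2.1) (instDecidableEqFin t _ _) (fun h =>
    Sum.inl ((c.tlits.get m).2.2 (Fin.cast (congrArg a h) (e.symm k).2)))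
  (fun _ => Sum.inr (m, k))

variable (c : Conjunct (finSig t a) σ)

theorem concat_tlits :
    (c.concat e).tlits = List.ofFn fun m => ((c.tlits.get m).1, ⟨(), c.concatAtom e m⟩) :=
  rfl

theorem concatAtom_apply_of_fst_eq (m : Fin c.tlits.length) {k : Fin (∑ j, a j)}
    (hk : (e.symm k).1 = (c.tlits.get m).2.1) :
    c.concatAtom e m k = Sum.inl ((c.tlits.get m).2.2 (Fin.cast (congrArg a hk) (e.symm k).2)) :=
  dif_pos hk

theorem concatAtom_apply_self (m : Fin c.tlits.length) (i : Fin (a (c.tlits.get m).2.1)) :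
    c.concatAtom e m (e ⟨(c.tlits.get m).2.1, i⟩) = Sum.inl ((c.tlits.get m).2.2 i) := by
  have hk : (e.symm (e ⟨(c.tlits.get m).2.1, i⟩)).1 = (c.tlits.get m).2.1 := by
    rw [e.symm_apply_apply]
  rw [c.concatAtom_apply_of_fst_eq e m hk]
  generalize hp : e.symm (e ⟨(c.tlits.get m).2.1, i⟩) = p at hk ⊢
  rw [e.symm_apply_apply] at hp
  subst hp
  rfl

theorem concatAtom_apply_of_ne (m : Fin c.tlits.length) {k : Fin (∑ j, a j)}
    (hk : (e.symm k).1 ≠ (c.tlits.get m).2.1) : c.concatAtom e m k = Sum.inr (m, k) :=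
  dif_neg hk

theorem forall_concat_tlits_iff_of_positive (hc : ∀ l ∈ c.tlits, l.1 = true)
    (rt : ∀ r : (oneSig t a).symb, Set (Fin ((oneSig t a).arity r) → D))
    (w : (c.concat e).Vars → D) :
    (∀ l ∈ (c.concat e).tlits, if l.1 = true then (fun i => w (l.2.2 i)) ∈ rt l.2.1
      else (fun i => w (l.2.2 i)) ∉ rt l.2.1) ↔
    ∀ m : Fin c.tlits.length, (fun k => w (c.concatAtom e m k)) ∈ rt () := by
  rw [concat_tlits, List.forall_mem_ofFn_iff]
  exact forall_congr' fun m => iff_of_eq (if_pos (hc _ (c.tlits.get_mem m)))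

theorem forall_concat_slits_iff (rs : ∀ X : σ.symb, Set (Fin (σ.arity X) → D))
    (w : (c.concat e).Vars → D) :
    (∀ l ∈ (c.concat e).slits, if l.1 = true then (fun i => w (l.2.2 i)) ∈ rs l.2.1
      else (fun i => w (l.2.2 i)) ∉ rs l.2.1) ↔
    (∀ l ∈ c.slits, if l.1 = true then (fun i => w (Sum.inl (l.2.2 i))) ∈ rs l.2.1
      else (fun i => w (Sum.inl (l.2.2 i))) ∉ rs l.2.1) :=
  List.forall_mem_map

theorem forall_concat_ineqs_iff (w : (c.concat e).Vars → D) :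
    (∀ p ∈ (c.concat e).ineqs, w p.1 ≠ w p.2) ↔
    ∀ p ∈ c.ineqs, w (Sum.inl p.1) ≠ w (Sum.inl p.2) :=
  List.forall_mem_map

theorem exists_holdsUnder_concat_iff (hc : ∀ l ∈ c.tlits, l.1 = true)
    (B1 : Struct (oneSig t a)) (rs : ∀ X : σ.symb, Set (Fin (σ.arity X) → B1.Dom)) :
    (∃ w, (c.concat e).HoldsUnder B1.rel rs w) ↔
    ∃ v, c.HoldsUnder (B1.fromOne e).rel rs v := by
  simp only [HoldsUnder, forall_concat_tlits_iff_of_positive e c hc,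
    forall_tlits_iff_of_positive c hc, forall_concat_slits_iff, forall_concat_ineqs_iff]
  constructor
  · rintro ⟨w, ht, hs, hi⟩
    exact ⟨w ∘ Sum.inl, fun m => ⟨_, ht m, fun i => by
      rw [concatAtom_apply_self]; rfl⟩, hs, hi⟩
  · rintro ⟨v, ht, hs, hi⟩
    choose u hu hvu using ht
    -- the fresh variables of the `m`-th atom take their values from the witness `u m`
    refine ⟨Sum.elim v fun p => u p.1 p.2, fun m => ?_, hs, hi⟩
    suffices hw : (fun k => Sum.elim v (fun p => u p.1 p.2) (c.concatAtom e m k)) = u m from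
      hw ▸ hu m
    funext k
    by_cases hk : (e.symm k).1 = (c.tlits.get m).2.1
    · obtain ⟨⟨j, i⟩, rfl⟩ := e.surjective k
      rw [e.symm_apply_apply] at hk
      subst hk
      rw [concatAtom_apply_self]
      exact (hvu m i).symm
    · rw [concatAtom_apply_of_ne e c m hk]
      rfl

end Conjunct

theorem sat_concat_fromOne_general {t : ℕ} {a : Fin t → ℕ} {σ : Signature}
    (e : (Σ j : Fin t, Fin (a j)) ≃ Fin (∑ j, a j))
    (Φ : SNP (finSig t a) σ) (hg : Φ.GMSNP)
    (B1 : Struct (oneSig t a)) :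
    (Φ.concat e).Sat B1 ↔ Φ.Sat (B1.fromOne e) := by
  refine exists_congr fun rs => ?_
  refine List.forall_mem_map.trans (forall₂_congr fun c hc => ?_)
  simpa only [not_exists] using not_congr (c.exists_holdsUnder_concat_iff e (hg.1 c hc) B1 rs)

/-- For an enriched GMSNP sentence `Φ` and the concatenated sentence `Φ¹`:
`B₁ ⊨ Φ¹` iff `B ⊨ Φ`. -/
theorem sat_concat_fromOne {t : ℕ} {a : Fin t → ℕ} {σ : Signature}
    (e : (Σ j : Fin t, Fin (a j)) ≃ Fin (∑ j, a j)) (he : IsConcatEquiv e)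
    (Φ : SNP (finSig t a) σ) (hg : Φ.GMSNP) (henr : Φ.Enriched)
    (B1 : Struct (oneSig t a)) :
    (Φ.concat e).Sat B1 ↔ Φ.Sat (B1.fromOne e) :=
  sat_concat_fromOne_general e Φ hg B1
end
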